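/- arXiv:math/0112278 — 2 statements merged into one kernel-verified Lean document; each statement's English description precedes it below -/
import Mathlib

section
/- If a ≠ b, the matrix A with A_{ij} = Y_{i-1}Y_j^{-1}a for i > j and A_{ij} = Y_{i-1}Y_j^{-1}b for i ≤ j is invertible, and its inverse B satisfies: B_{ii} = (b-a)^{-1}·Y_i·Y_{i-1}^{-1} for 1 ≤ i ≤ n (with Y_n := b·Y_0 interpreted appropriately, i.e. B_{nn} = (b-a)^{-1}·b·Y_{n-1}^{-1}), B_{i,i+1} = -(b-a)^{-1} for 1 ≤ i ≤ n-1, B_{n,1} = -a·(b-a)^{-1}, and all other entries of B are zero. -/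
/-- For n ≥ 2, a ≠ b, b ≠ 0, Y_0 = 1, Y_n = b, Y_i ≠ 0 for i ≤ n:
the matrix A with A_{ij} = Y_{i-1}Y_j^{-1}a (i > j), Y_{i-1}Y_j^{-1}b (i ≤ j) is
invertible with inverse B where B_{ii} = (b-a)^{-1}Y_iY_{i-1}^{-1},
B_{i,i+1} = -(b-a)^{-1}, B_{n,1} = -a(b-a)^{-1}, all other entries 0. -/
theorem Af_inverse (n : ℕ) (hn : 2 ≤ n) (a b : ℂ) (hab : a ≠ b) (hb : b ≠ 0)
    (Y : ℕ → ℂ) (hY0 : Y 0 = 1) (hYn : Y n = b) (hY : ∀ i ≤ n, Y i ≠ 0)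
    (A B : Matrix (Fin n) (Fin n) ℂ)
    (hA : ∀ i j : Fin n,
      A i j = Y i.val * (Y (j.val + 1))⁻¹ * (if (j : ℕ) < (i : ℕ) then a else b))
    (hB : ∀ i j : Fin n,
      B i j = if i = j then (b - a)⁻¹ * Y (i.val + 1) * (Y i.val)⁻¹
        else if j.val = i.val + 1 then -(b - a)⁻¹
        else if i.val = n - 1 ∧ j.val = 0 then -a * (b - a)⁻¹
        else 0) :
    A * B = 1 ∧ B * A = 1 := by
  have hba : b - a ≠ 0 := sub_ne_zero.mpr (Ne.symm hab)
  have key : B * A = 1 := by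
    ext i j
    rw [Matrix.mul_apply, Matrix.one_apply]
    have hYi : Y i.val ≠ 0 := hY _ (by omega)
    have hYj : Y (j.val + 1) ≠ 0 := hY _ (by omega)
    have eBii : B i i = (b - a)⁻¹ * Y (i.val + 1) * (Y i.val)⁻¹ := by
      rw [hB, if_pos rfl]
    by_cases hi : i.val = n - 1
    · -- last row
      have h0 : (0:ℕ) < n := by omega
      have hiz : i ≠ (⟨0, h0⟩ : Fin n) := by
        intro h; apply_fun Fin.val at h; simp at h; omega
      rw [Fintype.sum_eq_add i (⟨0, h0⟩ : Fin n) hiz (fun c hc => by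
        obtain ⟨hci, hcz⟩ := hc
        rw [hB]
        have h1 : ¬ (i = c) := fun h => hci h.symm
        have h2 : ¬ (c.val = i.val + 1) := by have := c.isLt; omega
        have h3 : ¬ (i.val = n - 1 ∧ c.val = 0) := by
          rintro ⟨_, hc0⟩
          exact hcz (Fin.ext hc0)
        rw [if_neg h1, if_neg h2, if_neg h3, zero_mul])]
      have eBiz : B i ⟨0, h0⟩ = -a * (b - a)⁻¹ := by
        rw [hB]
        rw [if_neg hiz, if_neg (show ¬((⟨0, h0⟩ : Fin n).val = i.val + 1) by
          simp), if_pos ⟨hi, rfl⟩]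
      have eAzj : A ⟨0, h0⟩ j = (Y (j.val + 1))⁻¹ * b := by
        rw [hA, if_neg (by simp)]
        simp [hY0]
      rw [eBii, eBiz, eAzj, hA i j]
      have hin : i.val + 1 = n := by omega
      by_cases hij : i = j
      · subst hij
        rw [if_pos rfl, if_neg (lt_irrefl (i:ℕ))]
        rw [hin, hYn]
        field_simp
        ring
      · have hji : (j:ℕ) < (i:ℕ) := by
          have := j.isLt
          have : j.val ≠ i.val := fun h => hij (Fin.ext (h.symm ▸ rfl)).symm
          omega
        rw [if_neg hij, if_pos hji, hin, hYn]
        field_simp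
        ring
    · -- not last row
      have hlt : i.val + 1 < n := by have := i.isLt; omega
      have hYi1 : Y (i.val + 1) ≠ 0 := hY _ (by omega)
      have hii' : i ≠ (⟨i.val + 1, hlt⟩ : Fin n) := by
        intro h; apply_fun Fin.val at h; simp at h
      rw [Fintype.sum_eq_add i (⟨i.val + 1, hlt⟩ : Fin n) hii' (fun c hc => by
        obtain ⟨hci, hci'⟩ := hc
        rw [hB]
        have h1 : ¬ (i = c) := fun h => hci h.symm
        have h2 : ¬ (c.val = i.val + 1) := fun h => hci' (Fin.ext h)
        have h3 : ¬ (i.val = n - 1 ∧ c.val = 0) := fun h => hi h.1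
        rw [if_neg h1, if_neg h2, if_neg h3, zero_mul])]
      have eBii' : B i ⟨i.val + 1, hlt⟩ = -(b - a)⁻¹ := by
        rw [hB, if_neg hii', if_pos (show (⟨i.val + 1, hlt⟩ : Fin n).val = i.val + 1 from rfl)]
      rw [eBii, eBii', hA i j, hA ⟨i.val + 1, hlt⟩ j]
      simp only [Fin.val_mk]
      by_cases hij : i = j
      · subst hij
        rw [if_pos rfl, if_neg (lt_irrefl (i:ℕ)), if_pos (Nat.lt_succ_self (i:ℕ))]
        field_simp
        ring
      · rw [if_neg hij]
        have hvne : (j:ℕ) ≠ (i:ℕ) := fun h => hij (Fin.ext (h.symm ▸ rfl)).symm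
        by_cases hji : (j:ℕ) < (i:ℕ)
        · rw [if_pos hji, if_pos (by omega : (j:ℕ) < (i:ℕ) + 1)]
          field_simp
          ring
        · rw [if_neg hji, if_neg (by omega : ¬((j:ℕ) < (i:ℕ) + 1))]
          field_simp
          ring
  exact ⟨mul_eq_one_comm.mpr key, key⟩
end

section
/- If a ≠ b and b ≠ 0, then the matrix A_f with entries A_{ij} = Y_{i-1}Y_j^{-1}a (i > j), Y_{i-1}Y_j^{-1}b (i ≤ j) defines an element of PGL_n(ℂ); moreover as Y varies over (ℂ*)^{n-1} and a over ℂ* \ {b}, the map Y ↦ [A_f(Y,a,b)] ∈ PGL_n(ℂ) is injective for n ≥ 2. -/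
/-- A_f(Y,a,b) with entries Y_{i-1}Y_{j-1}^{-1}a for i > j and Y_{i-1}Y_{j-1}^{-1}b
for i ≤ j (written 0-based). -/
noncomputable def Afmat (n : ℕ) (Y : ℕ → ℂ) (a b : ℂ) : Matrix (Fin n) (Fin n) ℂ :=
  Matrix.of fun i j => Y i.val * (Y j.val)⁻¹ * (if (j : ℕ) < (i : ℕ) then a else b)

/-- If a ≠ b and b ≠ 0 then A_f(Y,a,b) is invertible (so it defines an element of
PGL_n(ℂ)); moreover the map (Y,a) ↦ [A_f(Y,a,b)] ∈ PGL_n(ℂ) is injective for n ≥ 2: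
if A_f(Y,a,b) and A_f(Y',a',b) agree up to a nonzero scalar then a = a' and Y = Y'. -/
theorem Af_PGL_injective (n : ℕ) (hn : 2 ≤ n) (b : ℂ) (hb : b ≠ 0)
    (a a' : ℂ) (ha : a ≠ 0) (ha' : a' ≠ 0) (hab : a ≠ b) (hab' : a' ≠ b)
    (Y Y' : ℕ → ℂ) (hY0 : Y 0 = 1) (hY0' : Y' 0 = 1)
    (hY : ∀ i < n, Y i ≠ 0) (hY' : ∀ i < n, Y' i ≠ 0) :
    (Afmat n Y a b).det ≠ 0 ∧
    (∀ c : ℂ, c ≠ 0 → Afmat n Y a b = c • Afmat n Y' a' b →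
      a = a' ∧ ∀ i < n, Y i = Y' i) := by
  constructor
  · -- determinant is nonzero
    intro hdet
    obtain ⟨v, hv0, hv⟩ := Matrix.exists_mulVec_eq_zero_iff.mpr hdet
    set u : Fin n → ℂ := fun j => (Y j.val)⁻¹ * v j with hu
    have hS : ∀ i : Fin n, ∑ j : Fin n, (if j.val < i.val then a else b) * u j = 0 := by
      intro i
      have h1 := congrFun hv i
      simp only [Matrix.mulVec, dotProduct, Afmat, Matrix.of_apply,
        Pi.zero_apply] at h1
      have h2 : ∑ j : Fin n, Y i.val * ((if j.val < i.val then a else b) * u j) = 0 := by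
        rw [← h1]
        refine Finset.sum_congr rfl fun j _ => ?_
        simp only [hu]; ring
      rw [← Finset.mul_sum] at h2
      exact (mul_eq_zero.mp h2).resolve_left (hY i.val i.isLt)
    -- all but the last u vanish
    have hu0 : ∀ i : Fin n, i.val + 1 < n → u i = 0 := by
      intro i hi
      have hdiff : ∑ j : Fin n, (if j.val < i.val then a else b) * u j
          - ∑ j : Fin n, (if j.val < (⟨i.val + 1, hi⟩ : Fin n).val then a else b) * u j
          = (b - a) * u i := by
        rw [← Finset.sum_sub_distrib]
        have key : ∀ j : Fin n, (if j.val < i.val then a else b) * u j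
            - (if j.val < (⟨i.val + 1, hi⟩ : Fin n).val then a else b) * u j
            = (if j = i then (b - a) * u i else 0) := by
          intro j
          rcases eq_or_ne j i with rfl | hji
          · simp only [Fin.val_mk, lt_irrefl, if_false, if_true, Nat.lt_succ_self,
              if_pos rfl]
            ring
          · have hne : j.val ≠ i.val := fun h => hji (Fin.ext h)
            simp only [Fin.val_mk, if_neg hji]
            by_cases hj : j.val < i.val
            · rw [if_pos hj, if_pos (by omega)]; ring
            · rw [if_neg hj, if_neg (by omega)]; ring
        rw [Finset.sum_congr rfl fun j _ => key j, Finset.sum_ite_eq' _ i]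
        simp
      rw [hS i, hS ⟨i.val + 1, hi⟩, sub_zero] at hdiff
      have hba : b - a ≠ 0 := sub_ne_zero.mpr (Ne.symm hab)
      exact (mul_eq_zero.mp hdiff.symm).resolve_left hba
    -- last coordinate
    have hlast : u ⟨n - 1, by omega⟩ = 0 := by
      have h := hS ⟨n - 1, by omega⟩
      have hsum : ∑ j : Fin n, (if j.val < (⟨n - 1, by omega⟩ : Fin n).val then a else b) * u j
          = b * u ⟨n - 1, by omega⟩ := by
        rw [Finset.sum_eq_single (⟨n - 1, by omega⟩ : Fin n)]
        · simp
        · intro j _ hj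
          have hjv : j.val ≠ n - 1 := fun h => hj (Fin.ext (by simpa using h))
          have hj' : j.val + 1 < n := by have := j.isLt; omega
          rw [hu0 j hj', mul_zero]
        · intro h; exact absurd (Finset.mem_univ _) h
      rw [hsum] at h
      exact (mul_eq_zero.mp h).resolve_left hb
    have hall : ∀ i : Fin n, u i = 0 := by
      intro i
      rcases Nat.lt_or_ge (i.val + 1) n with h' | h'
      · exact hu0 i h'
      · have hiv : i = (⟨n - 1, by omega⟩ : Fin n) := Fin.ext (by
          simp only [Fin.val_mk]; have := i.isLt; omega)
        rw [hiv]; exact hlast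
    apply hv0
    funext j
    have h3 := hall j
    rw [hu] at h3
    exact (mul_eq_zero.mp h3).resolve_left (inv_ne_zero (hY j.val j.isLt))
  · intro c hc h
    have hentry : ∀ i j : Fin n,
        Y i.val * (Y j.val)⁻¹ * (if j.val < i.val then a else b)
        = c * (Y' i.val * (Y' j.val)⁻¹ * (if j.val < i.val then a' else b)) := by
      intro i j
      have := congrFun (congrFun h i) j
      simpa [Afmat] using this
    have hc1 : c = 1 := by
      have h0 := hentry ⟨0, by omega⟩ ⟨0, by omega⟩
      simp only [Fin.val_mk, lt_irrefl, if_false, hY0, hY0', inv_one, one_mul,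
        mul_one] at h0
      -- h0 : b = c * b
      have := mul_right_cancel₀ hb (show c * b = 1 * b by rw [← h0, one_mul])
      exact this
    subst hc1
    rw [one_smul] at h
    have hYeq : ∀ i < n, Y i = Y' i := by
      intro i hi
      have h0 := hentry ⟨0, by omega⟩ ⟨i, hi⟩
      simp only [Fin.val_mk, Nat.not_lt_zero, if_false, hY0, hY0', one_mul] at h0
      have h2 : (Y i)⁻¹ = (Y' i)⁻¹ := mul_right_cancel₀ hb h0
      exact inv_injective h2
    refine ⟨?_, hYeq⟩
    have h0 := hentry ⟨1, by omega⟩ ⟨0, by omega⟩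
    simp only [Fin.val_mk, Nat.zero_lt_one, if_true, hY0, hY0', inv_one, mul_one,
      one_mul] at h0
    rw [hYeq 1 (by omega)] at h0
    exact mul_left_cancel₀ (hY' 1 (by omega)) h0
end
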